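/- arXiv:1510.08771 — 4 statements merged into one kernel-verified Lean document; each statement's English description precedes it below -/
import Mathlib

section
/- A point p = (x₀, y₀, u₀, v₀) of the surface S_{P,Q} with y₀ ≠ 0 is a smooth point of S_{P,Q}, i.e., the Jacobian matrix of the three defining equations at p has rank 2. -/
/-- The 3×4 Jacobian matrix of the defining polynomials
(yu − xP(x), xv − uQ(u), yv − P(x)Q(u)) of S_{P,Q} at the point (x,y,u,v). -/
noncomputable def jacSPQ (P Q : Polynomial ℂ) (x y u v : ℂ) : Matrix (Fin 3) (Fin 4) ℂ :=
  !![-(P.eval x + x * (Polynomial.derivative P).eval x), u, y, 0;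
     v, 0, -(Q.eval u + u * (Polynomial.derivative Q).eval u), x;
     -((Polynomial.derivative P).eval x * Q.eval u), v, -(P.eval x * (Polynomial.derivative Q).eval u), y]

/-- a point of S_{P,Q} with y₀ ≠ 0 is a smooth point:
the Jacobian has rank 2 there. -/
theorem stmt_2 (P Q : Polynomial ℂ) (x₀ y₀ u₀ v₀ : ℂ)
    (h1 : y₀ * u₀ = x₀ * P.eval x₀) (h2 : x₀ * v₀ = u₀ * Q.eval u₀)
    (h3 : y₀ * v₀ = P.eval x₀ * Q.eval u₀) (hy : y₀ ≠ 0) :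
    (jacSPQ P Q x₀ y₀ u₀ v₀).rank = 2 := by
  classical
  set A := jacSPQ P Q x₀ y₀ u₀ v₀ with hAdef
  -- the row relation
  set w : Fin 3 → ℂ := ![Q.eval u₀, y₀, -x₀] with hwdef
  have hw : Matrix.vecMul w A = 0 := by
    funext j
    fin_cases j <;>
      simp [hAdef, jacSPQ, hwdef, Matrix.vecMul, dotProduct, Fin.sum_univ_three]
    · linear_combination h3
    · linear_combination -h2
    · linear_combination -(Polynomial.derivative Q).eval u₀ * h1
    · ring
  -- the linear functional given by w
  let f : (Fin 3 → ℂ) →ₗ[ℂ] ℂ :=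
    { toFun := fun v => dotProduct w v
      map_add' := fun a b => dotProduct_add _ _ _
      map_smul' := fun c a => by simpa using dotProduct_smul c w a }
  have hsub : LinearMap.range A.mulVecLin ≤ LinearMap.ker f := by
    rintro _ ⟨x, rfl⟩
    simp only [LinearMap.mem_ker, Matrix.mulVecLin_apply]
    show dotProduct w (A.mulVec x) = 0
    rw [Matrix.dotProduct_mulVec, hw, zero_dotProduct]
  have hrange : Module.finrank ℂ (LinearMap.range f) = 1 := by
    have hf : f ≠ 0 := by
      intro h
      have : f (Pi.single 1 1) = 0 := by rw [h]; rfl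
      simp [f, dotProduct, Fin.sum_univ_three, hwdef] at this
      exact hy this
    rw [LinearMap.range_eq_top.mpr (LinearMap.surjective_of_ne_zero hf)]
    simp
  have hker : Module.finrank ℂ (LinearMap.ker f) = 2 := by
    have := LinearMap.finrank_range_add_finrank_ker f
    simp only [Module.finrank_pi, Fintype.card_fin] at this
    omega
  have le2 : A.rank ≤ 2 := by
    have := Submodule.finrank_mono hsub
    rw [hker] at this
    exact this
  -- lower bound: columns 2 and 3 are independent
  have hli : LinearIndependent ℂ ![(fun i => A i 2), (fun i => A i 3)] := by
    rw [LinearIndependent.pair_iff]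
    intro s t hst
    have e0 := congrFun hst 0
    have e2 := congrFun hst 2
    simp [hAdef, jacSPQ] at e0 e2
    have hs : s = 0 := by
      rcases e0 with h | h
      · exact h
      · exact absurd h hy
    subst hs
    simp [Matrix.vecHead, mul_eq_zero] at e2
    refine ⟨rfl, ?_⟩
    rcases e2 with h | h
    · exact h
    · exact absurd h hy
  have hspanle : Submodule.span ℂ (Set.range ![(fun i => A i 2), (fun i => A i 3)])
      ≤ LinearMap.range A.mulVecLin := by
    rw [Submodule.span_le]
    rintro x hx
    rcases hx with ⟨k, rfl⟩
    fin_cases k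
    · exact ⟨Pi.single 2 1, by simp [Matrix.mulVecLin_apply, Matrix.mulVec_single]; rfl⟩
    · exact ⟨Pi.single 3 1, by simp [Matrix.mulVecLin_apply, Matrix.mulVec_single]; rfl⟩
  have ge2 : 2 ≤ A.rank := by
    have hcard := finrank_span_eq_card hli
    simp only [Fintype.card_fin] at hcard
    have := Submodule.finrank_mono hspanle
    rw [hcard] at this
    exact this
  omega
end

section
/- If P and Q are complex polynomials such that P has a multiple zero (i.e., a zero a with P(a) = P'(a) = 0), then the point (a, 0, 0, 0) is a singular point of S_{P,Q}: the Jacobian matrix of the defining equations at this point has rank strictly less than 2. -/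
/-- if P has a multiple zero a (P(a) = P'(a) = 0), then (a,0,0,0)
is a singular point of S_{P,Q}: the Jacobian there has rank < 2. -/
theorem stmt_3 (P Q : Polynomial ℂ) (a : ℂ) (ha : P.eval a = 0)
    (ha' : (Polynomial.derivative P).eval a = 0) :
    (jacSPQ P Q a 0 0 0).rank < 2 := by
  have hM : jacSPQ P Q a 0 0 0 =
      Matrix.replicateCol (Fin 1) (![0, 1, 0] : Fin 3 → ℂ) *
      Matrix.replicateRow (Fin 1) ![0, 0,
        -(Q.eval 0 + 0 * (Polynomial.derivative Q).eval 0), a] := by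
    ext i j
    fin_cases i <;> fin_cases j <;>
      simp [jacSPQ, ha, ha', Matrix.mul_apply, Matrix.replicateCol, Matrix.replicateRow, Fin.sum_univ_one, Matrix.vecHead, Matrix.vecTail]
  rw [hM]
  calc (Matrix.replicateCol (Fin 1) (![0, 1, 0] : Fin 3 → ℂ) *
      Matrix.replicateRow (Fin 1) ![0, 0,
        -(Q.eval 0 + 0 * (Polynomial.derivative Q).eval 0), a]).rank
      ≤ (Matrix.replicateCol (Fin 1) (![0, 1, 0] : Fin 3 → ℂ)).rank :=
        Matrix.rank_mul_le_left _ _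
    _ ≤ Fintype.card (Fin 1) := Matrix.rank_le_card_width _
    _ < 2 := by simp
end

section
/- Let P ∈ ℂ[x] with P(0) = 0. Then the vector field Θ = y ∂/∂x + (P(x) + xP'(x)) ∂/∂u + (P'(x)Q(u) + P'(x)uQ'(u) + (P(x)/x)·uQ'(u)) ∂/∂v (where P(x)/x denotes the polynomial obtained by dividing P by x) is tangent to the surface S_{P,Q}, i.e., Θ annihilates each of the three defining polynomials yu − xP(x), xv − uQ(u), yv − P(x)Q(u) modulo the ideal they generate. -/
open MvPolynomial

lemma pderiv_aeval_X (R : Polynomial ℂ) (i j : Fin 4) :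
    pderiv i (Polynomial.aeval (X j : MvPolynomial (Fin 4) ℂ) R)
      = Polynomial.aeval (X j : MvPolynomial (Fin 4) ℂ) (Polynomial.derivative R)
          * pderiv i (X j) := by
  rw [Derivation.map_aeval]; simp [smul_eq_mul]

/-- The derivation Θ = y ∂/∂x + (P(x) + xP'(x)) ∂/∂u
+ (P'(x)Q(u) + P'(x)uQ'(u) + (P(x)/x)·uQ'(u)) ∂/∂v applied to F ∈ ℂ[x,y,u,v],
where P = x·P₁ so that P(x)/x = P₁(x).  Coordinates: x = X 0, y = X 1, u = X 2, v = X 3. -/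
noncomputable def thetaVF (P Q P₁ : Polynomial ℂ) (F : MvPolynomial (Fin 4) ℂ) :
    MvPolynomial (Fin 4) ℂ :=
  X 1 * pderiv (0 : Fin 4) F
    + (Polynomial.aeval (X 0) P + X 0 * Polynomial.aeval (X 0) (Polynomial.derivative P))
        * pderiv (2 : Fin 4) F
    + (Polynomial.aeval (X 0) (Polynomial.derivative P) * Polynomial.aeval (X 2) Q
        + Polynomial.aeval (X 0) (Polynomial.derivative P) * X 2
            * Polynomial.aeval (X 2) (Polynomial.derivative Q)
        + Polynomial.aeval (X 0) P₁ * X 2 * Polynomial.aeval (X 2) (Polynomial.derivative Q))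
        * pderiv (3 : Fin 4) F

/-- if P(0) = 0 (i.e. P = x·P₁), then Θ is tangent to S_{P,Q}:
it maps each defining polynomial into the ideal they generate. -/
theorem stmt_10 (P Q P₁ : Polynomial ℂ) (hP : P = Polynomial.X * P₁) :
    let F₁ : MvPolynomial (Fin 4) ℂ := X 1 * X 2 - X 0 * Polynomial.aeval (X 0) P
    let F₂ : MvPolynomial (Fin 4) ℂ := X 0 * X 3 - X 2 * Polynomial.aeval (X 2) Q
    let F₃ : MvPolynomial (Fin 4) ℂ :=
      X 1 * X 3 - Polynomial.aeval (X 0) P * Polynomial.aeval (X 2) Q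
    thetaVF P Q P₁ F₁ ∈ Ideal.span {F₁, F₂, F₃} ∧
    thetaVF P Q P₁ F₂ ∈ Ideal.span {F₁, F₂, F₃} ∧
    thetaVF P Q P₁ F₃ ∈ Ideal.span {F₁, F₂, F₃} := by
  intro F₁ F₂ F₃
  have hp : (Polynomial.aeval (X 0 : MvPolynomial (Fin 4) ℂ)) P
      = X 0 * Polynomial.aeval (X 0) P₁ := by rw [hP]; simp
  have h1 : thetaVF P Q P₁ F₁ = 0 := by
    simp [thetaVF, F₁, pderiv_aeval_X, pderiv_X, Pi.single_apply]
    ring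
  have h2 : thetaVF P Q P₁ F₂ = F₃ := by
    simp [thetaVF, F₂, F₃, pderiv_aeval_X, pderiv_X, Pi.single_apply]
    rw [hp]; ring
  have h3 : thetaVF P Q P₁ F₃ =
      ((Polynomial.aeval (X 0) (Polynomial.derivative P) + Polynomial.aeval (X 0) P₁)
        * Polynomial.aeval (X 2) (Polynomial.derivative Q)) * F₁ := by
    simp [thetaVF, F₁, F₃, pderiv_aeval_X, pderiv_X, Pi.single_apply]
    rw [hp]; ring
  have m1 : F₁ ∈ Ideal.span {F₁, F₂, F₃} := Ideal.subset_span (by simp)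
  have m3 : F₃ ∈ Ideal.span {F₁, F₂, F₃} := Ideal.subset_span (by simp)
  exact ⟨h1 ▸ (Ideal.span _).zero_mem, h2 ▸ m3,
    h3 ▸ Ideal.mul_mem_left _ _ m1⟩
end

section
/- Let P, Q be complex polynomials with only simple zeros such that not both P(0) = 0 and Q(0) = 0. Define S to be the zero set in ℂ⁴ of yu − xP(x), xv − uQ(u), yv − P(x)Q(u). Then every point of S is a smooth point, i.e., the Jacobian of the three defining polynomials has rank exactly 2 at each point of S. -/
open Polynomial Matrix

lemma deriv_ne_of_coprime (P : Polynomial ℂ) (h : IsCoprime P (derivative P)) {x : ℂ}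
    (hx : P.eval x = 0) : (derivative P).eval x ≠ 0 := by
  obtain ⟨a, b, hab⟩ := h
  intro h'
  have := congrArg (Polynomial.eval x) hab
  simp [hx, h'] at this

lemma two_le_rank_of_minor (M : Matrix (Fin 3) (Fin 4) ℂ) (i j : Fin 3) (k l : Fin 4)
    (h : M i k * M j l - M i l * M j k ≠ 0) : 2 ≤ M.rank := by
  rw [Matrix.rank_eq_finrank_span_cols]
  have hli : LinearIndependent ℂ ![Mᵀ k, Mᵀ l] := by
    rw [LinearIndependent.pair_iff]
    intro s t hst
    have e1 : s * M i k + t * M i l = 0 := by simpa using congr_fun hst i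
    have e2 : s * M j k + t * M j l = 0 := by simpa using congr_fun hst j
    have hs : s * (M i k * M j l - M i l * M j k) = 0 := by
      linear_combination M j l * e1 - M i l * e2
    have ht : t * (M i k * M j l - M i l * M j k) = 0 := by
      linear_combination M i k * e2 - M j k * e1
    exact ⟨(mul_eq_zero.1 hs).resolve_right h, (mul_eq_zero.1 ht).resolve_right h⟩
  have hcard := finrank_span_eq_card hli
  simp only [Fintype.card_fin] at hcard
  have hmono : Module.finrank ℂ (Submodule.span ℂ (Set.range ![Mᵀ k, Mᵀ l])) ≤
      Module.finrank ℂ (Submodule.span ℂ (Set.range M.col)) := by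
    apply Submodule.finrank_mono
    apply Submodule.span_mono
    rintro w ⟨a, rfl⟩
    fin_cases a <;> exact ⟨_, rfl⟩
  omega

lemma rank_le_two_of_ker (M : Matrix (Fin 3) (Fin 4) ℂ) (c : Fin 3 → ℂ)
    (hc : ¬ (c 0 = 0 ∧ c 1 = 0 ∧ c 2 = 0))
    (h : ∀ j, c 0 * M 0 j + c 1 * M 1 j + c 2 * M 2 j = 0) : M.rank ≤ 2 := by
  rw [← Matrix.rank_transpose]
  have hker : c ∈ LinearMap.ker Mᵀ.mulVecLin := by
    simp only [LinearMap.mem_ker, Matrix.mulVecLin_apply]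
    funext j
    simpa [Matrix.mulVec, dotProduct, Fin.sum_univ_three, mul_comm] using h j
  have h1 : LinearMap.ker Mᵀ.mulVecLin ≠ ⊥ := by
    intro hbot
    rw [hbot, Submodule.mem_bot] at hker
    exact hc ⟨by rw [hker]; rfl, by rw [hker]; rfl, by rw [hker]; rfl⟩
  have h2 : Module.finrank ℂ (LinearMap.ker Mᵀ.mulVecLin) ≠ 0 :=
    fun hz => h1 (Submodule.finrank_eq_zero.1 hz)
  have h3 := LinearMap.finrank_range_add_finrank_ker Mᵀ.mulVecLin
  rw [Module.finrank_fin_fun] at h3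
  rw [Matrix.rank]
  omega



/-- if P and Q have only simple zeros (each coprime with its derivative)
and not both vanish at 0, then every point of S_{P,Q} is smooth: the Jacobian of the
defining polynomials has rank exactly 2 there. -/
theorem stmt_12 (P Q : Polynomial ℂ)
    (hP : IsCoprime P (Polynomial.derivative P))
    (hQ : IsCoprime Q (Polynomial.derivative Q))
    (h0 : ¬ (P.eval 0 = 0 ∧ Q.eval 0 = 0))
    (x y u v : ℂ) (h1 : y * u = x * P.eval x) (h2 : x * v = u * Q.eval u)
    (h3 : y * v = P.eval x * Q.eval u) :
    (jacSPQ P Q x y u v).rank = 2 := by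
  have hle : (jacSPQ P Q x y u v).rank ≤ 2 := by
    by_cases hA : v = 0 ∧ P.eval x = 0 ∧ u = 0
    · obtain ⟨hv, hpz, hu⟩ := hA
      apply rank_le_two_of_ker _ ![Q.eval u, y, -x]
      · rintro ⟨hq0, hy0, hx0⟩
        simp only [Matrix.cons_val_zero, Matrix.cons_val_one, Matrix.head_cons,
          Matrix.cons_val_two, Matrix.tail_cons, neg_eq_zero] at hq0 hy0 hx0
        rw [hx0] at hpz
        rw [hu] at hq0
        exact h0 ⟨hpz, hq0⟩
      · intro j
        fin_cases j
        · simp [jacSPQ]; linear_combination h3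
        · simp [jacSPQ]; linear_combination -h2
        · simp [jacSPQ]; linear_combination (-(Polynomial.derivative Q).eval u) * h1
        · simp [jacSPQ]; ring
    · apply rank_le_two_of_ker _ ![v, P.eval x, -u]
      · rintro ⟨hv0, hp0, hu0⟩
        simp only [Matrix.cons_val_zero, Matrix.cons_val_one, Matrix.head_cons,
          Matrix.cons_val_two, Matrix.tail_cons, neg_eq_zero] at hv0 hp0 hu0
        exact hA ⟨hv0, hp0, hu0⟩
      · intro j
        fin_cases j
        · simp [jacSPQ]; linear_combination (-(Polynomial.derivative P).eval x) * h2
        · simp [jacSPQ]; ring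
        · simp [jacSPQ]; linear_combination h3
        · simp [jacSPQ]; linear_combination -h1
  have hge : 2 ≤ (jacSPQ P Q x y u v).rank := by
    by_cases hx : x = 0
    · by_cases hu : u = 0
      · subst hx hu
        by_cases hv : v = 0
        · have hpq : P.eval 0 * Q.eval 0 = 0 := by rw [← h3, hv, mul_zero]
          rcases mul_eq_zero.1 hpq with hpz | hqz
          · have hqnz : Q.eval 0 ≠ 0 := fun hqz => h0 ⟨hpz, hqz⟩
            have hp'nz := deriv_ne_of_coprime P hP hpz
            apply two_le_rank_of_minor _ 1 2 0 2
            have e : jacSPQ P Q 0 y 0 v 1 0 * jacSPQ P Q 0 y 0 v 2 2 -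
                jacSPQ P Q 0 y 0 v 1 2 * jacSPQ P Q 0 y 0 v 2 0 =
                -((Polynomial.derivative P).eval 0 * Q.eval 0 ^ 2) := by
              simp [jacSPQ, hv, hpz]; ring
            rw [e]
            exact neg_ne_zero.2 (mul_ne_zero hp'nz (pow_ne_zero 2 hqnz))
          · have hpnz : P.eval 0 ≠ 0 := fun hpz => h0 ⟨hpz, hqz⟩
            have hq'nz := deriv_ne_of_coprime Q hQ hqz
            apply two_le_rank_of_minor _ 0 2 0 2
            have e : jacSPQ P Q 0 y 0 v 0 0 * jacSPQ P Q 0 y 0 v 2 2 -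
                jacSPQ P Q 0 y 0 v 0 2 * jacSPQ P Q 0 y 0 v 2 0 =
                P.eval 0 ^ 2 * (Polynomial.derivative Q).eval 0 := by
              simp [jacSPQ, hqz]; ring
            rw [e]
            exact mul_ne_zero (pow_ne_zero 2 hpnz) hq'nz
        · apply two_le_rank_of_minor _ 1 2 0 1
          have e : jacSPQ P Q 0 y 0 v 1 0 * jacSPQ P Q 0 y 0 v 2 1 -
              jacSPQ P Q 0 y 0 v 1 1 * jacSPQ P Q 0 y 0 v 2 0 = v ^ 2 := by
            simp [jacSPQ]; ring
          rw [e]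
          exact pow_ne_zero 2 hv
      · subst hx
        have hy : y = 0 := by
          rcases mul_eq_zero.1 (show y * u = 0 by rw [h1, zero_mul]) with h' | h'
          · exact h'
          · exact absurd h' hu
        have hqz : Q.eval u = 0 := by
          rcases mul_eq_zero.1 (show u * Q.eval u = 0 by rw [← h2, zero_mul]) with h' | h'
          · exact absurd h' hu
          · exact h'
        have hq'nz := deriv_ne_of_coprime Q hQ hqz
        apply two_le_rank_of_minor _ 0 1 1 2
        have e : jacSPQ P Q 0 y u v 0 1 * jacSPQ P Q 0 y u v 1 2 -
            jacSPQ P Q 0 y u v 0 2 * jacSPQ P Q 0 y u v 1 1 =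
            -(u ^ 2 * (Polynomial.derivative Q).eval u) := by
          simp [jacSPQ, hy, hqz]; ring
        rw [e]
        exact neg_ne_zero.2 (mul_ne_zero (pow_ne_zero 2 hu) hq'nz)
    · by_cases hu : u = 0
      · subst hu
        have hv : v = 0 := by
          rcases mul_eq_zero.1 (show x * v = 0 by rw [h2, zero_mul]) with h' | h'
          · exact absurd h' hx
          · exact h'
        have hpz : P.eval x = 0 := by
          rcases mul_eq_zero.1 (show x * P.eval x = 0 by rw [← h1, mul_zero]) with h' | h'
          · exact absurd h' hx
          · exact h'
        have hp'nz := deriv_ne_of_coprime P hP hpz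
        apply two_le_rank_of_minor _ 0 1 0 3
        have e : jacSPQ P Q x y 0 v 0 0 * jacSPQ P Q x y 0 v 1 3 -
            jacSPQ P Q x y 0 v 0 3 * jacSPQ P Q x y 0 v 1 0 =
            -(x ^ 2 * (Polynomial.derivative P).eval x) := by
          simp [jacSPQ, hpz]; ring
        rw [e]
        exact neg_ne_zero.2 (mul_ne_zero (pow_ne_zero 2 hx) hp'nz)
      · apply two_le_rank_of_minor _ 0 1 1 3
        have e : jacSPQ P Q x y u v 0 1 * jacSPQ P Q x y u v 1 3 -
            jacSPQ P Q x y u v 0 3 * jacSPQ P Q x y u v 1 1 = u * x := by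
          simp [jacSPQ]
        rw [e]
        exact mul_ne_zero hu hx
  omega
end
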